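/- Let f, g, h be non-constant meromorphic functions on ℂ satisfying f^n + g^m + h^k = 1 with min{n, m, k} ≥ 2 and with f^n, g^m, h^k linearly independent over ℂ, let D = W(f^n, g^m, h^k) be their Wronskian, and let z₀ ∈ ℂ be a point with p, q, t the orders of f, g, h at z₀. If max{p, q, t} < 0 (so z₀ is a common pole of f, g, h), max{n|p|, m|q|, k|t|} > min{n|p|, m|q|, k|t|}, and k|t| = min{n|p|, m|q|, k|t|}, then A(z₀) ≤ 9 − (m|q| − k|t|). -/

import Mathlib

/-- The order of a meromorphic function at a point: the exponent of the leading term of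
the Laurent expansion (negative at a pole, positive at a zero, `0` otherwise; by
convention `0` if the function is not meromorphic at the point or vanishes identically
near it). -/
noncomputable def meroOrd (f : ℂ → ℂ) (z : ℂ) : ℤ :=
  open Classical in
  if h : MeromorphicAt f z then WithTop.untopD 0 (meromorphicOrderAt f z) else 0

/-- The pole multiplicity `U(F, z₀) = max (−ord(F, z₀), 0)`. -/
noncomputable def poleMult (f : ℂ → ℂ) (z : ℂ) : ℕ := (-(meroOrd f z)).toNat

/-- The zero multiplicity `U(1/F, z₀) = max (ord(F, z₀), 0)`. -/
noncomputable def zeroMult (f : ℂ → ℂ) (z : ℂ) : ℕ := (meroOrd f z).toNat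

/-- The Wronskian `W(F₁, F₂, F₃)`: the determinant of the 3×3 matrix whose rows are
the functions, their first derivatives and their second derivatives. -/
noncomputable def wronskian3 (F₁ F₂ F₃ : ℂ → ℂ) (z : ℂ) : ℂ :=
  Matrix.det !![F₁ z, F₂ z, F₃ z;
                deriv F₁ z, deriv F₂ z, deriv F₃ z;
                deriv (deriv F₁) z, deriv (deriv F₂) z, deriv (deriv F₃) z]

/-- The quantity
`A(z₀) = 3(U(1/F₁) + U(1/F₂) + U(1/F₃)) + 3U(D) − 3U(1/D) − 2(U(F₁) + U(F₂) + U(F₃))`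
at `z₀`, where `D = W(F₁, F₂, F₃)`. -/
noncomputable def nevanA (F₁ F₂ F₃ : ℂ → ℂ) (z : ℂ) : ℤ :=
  3 * ((zeroMult F₁ z : ℤ) + (zeroMult F₂ z : ℤ) + (zeroMult F₃ z : ℤ))
    + 3 * (poleMult (wronskian3 F₁ F₂ F₃) z : ℤ)
    - 3 * (zeroMult (wronskian3 F₁ F₂ F₃) z : ℤ)
    - 2 * ((poleMult F₁ z : ℤ) + (poleMult F₂ z : ℤ) + (poleMult F₃ z : ℤ))

/-!
At a common pole the functions `f^n`, `g^m`, `h^k` have orders `np`, `mq`, `kt < 0`. Their sum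
is `1`, of order `0`, so the smallest of the three orders cannot be attained only once; since `kt`
is the largest, `np = mq`. Eliminating `f^n` through the relation turns the Wronskian into
`(g^m)'(h^k)'' - (h^k)'(g^m)''`, of order at least `mq + kt - 3`. Hence
`A(z₀) ≤ 3(3 - mq - kt) + 2(np + mq + kt) = 9 + mq - kt`.
-/

open Filter Topology

section Order

variable {𝕜 : Type*} [NontriviallyNormedField 𝕜]

theorem le_meromorphicOrderAt_deriv [CharZero 𝕜] {E : Type*} [NormedAddCommGroup E]
    [NormedSpace 𝕜 E] [CompleteSpace E] {f : 𝕜 → E} {x : 𝕜} {n : ℤ}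
    (hf : MeromorphicAt f x) (hn : ↑n ≤ meromorphicOrderAt f x) :
    ↑(n - 1) ≤ meromorphicOrderAt (deriv f) x := by
  cases ho : meromorphicOrderAt f x with
  | top =>
    have hzero : f =ᶠ[𝓝[≠] x] fun _ ↦ (0 : E) := meromorphicOrderAt_eq_top_iff.mp ho
    rw [meromorphicOrderAt_congr hzero.nhdsNE_deriv, deriv_const',
      meromorphicOrderAt_eq_top_iff.mpr (by simp)]
    exact le_top
  | coe m =>
    rw [ho, WithTop.coe_le_coe] at hn
    by_cases hm : m = 0
    · obtain ⟨g, hg, hfg⟩ := hf.meromorphicOrderAt_nonneg_iff.mp (by simp [ho, hm])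
      rw [meromorphicOrderAt_congr hfg.nhdsNE_deriv]
      exact le_trans (by exact_mod_cast (by omega : n - 1 ≤ 0)) hg.deriv.meromorphicOrderAt_nonneg
    · rw [meromorphicOrderAt_deriv_eq_sub_one (by exact_mod_cast hm) ho]
      exact_mod_cast (by omega : n - 1 ≤ m - 1)

variable {F₁ F₂ F₃ : 𝕜 → 𝕜} {x : 𝕜}

theorem meromorphicOrderAt_le_of_add_add_eq_one
    (hsum : ∀ᶠ z in 𝓝[≠] x, F₁ z + F₂ z + F₃ z = 1)
    (hF₂ : MeromorphicAt F₂ x) (hF₃ : MeromorphicAt F₃ x) (hneg : meromorphicOrderAt F₁ x < 0)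
    (h₁₃ : meromorphicOrderAt F₁ x < meromorphicOrderAt F₃ x) :
    meromorphicOrderAt F₂ x ≤ meromorphicOrderAt F₁ x := by
  by_contra! h₁₂
  have hlt : meromorphicOrderAt F₁ x < meromorphicOrderAt (F₂ + F₃) x :=
    (lt_min h₁₂ h₁₃).trans_le (meromorphicOrderAt_add hF₂ hF₃)
  have hone : F₁ + (F₂ + F₃) =ᶠ[𝓝[≠] x] fun _ ↦ 1 :=
    hsum.mono fun z hz ↦ by simpa [add_assoc] using hz
  have hone_ord : meromorphicOrderAt (fun _ ↦ (1 : 𝕜)) x = 0 := by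
    classical
    simp [meromorphicOrderAt_const]
  rw [← meromorphicOrderAt_add_eq_left_of_lt (hF₂.add hF₃) hlt, meromorphicOrderAt_congr hone,
    hone_ord] at hneg
  exact lt_irrefl _ hneg

theorem meromorphicOrderAt_eq_of_add_add_eq_one
    (hsum : ∀ᶠ z in 𝓝[≠] x, F₁ z + F₂ z + F₃ z = 1) (hF₁ : MeromorphicAt F₁ x)
    (hF₂ : MeromorphicAt F₂ x) (hF₃ : MeromorphicAt F₃ x) (hneg : meromorphicOrderAt F₁ x < 0)
    (h₁₃ : meromorphicOrderAt F₁ x ≤ meromorphicOrderAt F₃ x)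
    (h₂₃ : meromorphicOrderAt F₂ x ≤ meromorphicOrderAt F₃ x) :
    meromorphicOrderAt F₁ x = meromorphicOrderAt F₂ x := by
  have hsum' : ∀ᶠ z in 𝓝[≠] x, F₂ z + F₁ z + F₃ z = 1 :=
    hsum.mono fun z hz ↦ by rw [← hz]; ring
  refine le_antisymm (not_lt.mp fun h₂₁ ↦ ?_) (not_lt.mp fun h₁₂ ↦ ?_)
  · exact h₂₁.not_ge (meromorphicOrderAt_le_of_add_add_eq_one hsum' hF₁ hF₃ (h₂₁.trans hneg)
      (h₂₁.trans_le h₁₃))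
  · exact h₁₂.not_ge (meromorphicOrderAt_le_of_add_add_eq_one hsum hF₂ hF₃ hneg
      (h₁₂.trans_le h₂₃))

end Order

section Wronskian

variable {F₁ F₂ F₃ : ℂ → ℂ} {x : ℂ}

theorem wronskian3_eventuallyEq_of_add_add_eq_one
    (hsum : ∀ᶠ z in 𝓝[≠] x, F₁ z + F₂ z + F₃ z = 1)
    (hF₂ : MeromorphicAt F₂ x) (hF₃ : MeromorphicAt F₃ x) :
    wronskian3 F₁ F₂ F₃ =ᶠ[𝓝[≠] x] deriv F₂ * deriv (deriv F₃) - deriv F₃ * deriv (deriv F₂) := by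
  have h₀ : F₁ =ᶠ[𝓝[≠] x] fun z ↦ 1 - (F₂ z + F₃ z) :=
    hsum.mono fun z hz ↦ by linear_combination hz
  have h₁ : deriv F₁ =ᶠ[𝓝[≠] x] fun z ↦ -(deriv F₂ z + deriv F₃ z) := by
    filter_upwards [h₀.nhdsNE_deriv, hF₂.eventually_analyticAt, hF₃.eventually_analyticAt]
      with z hz ha₂ ha₃
    rw [hz, deriv_const_sub, deriv_fun_add ha₂.differentiableAt ha₃.differentiableAt]
  have h₂ : deriv (deriv F₁) =ᶠ[𝓝[≠] x] fun z ↦ -(deriv (deriv F₂) z + deriv (deriv F₃) z) := by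
    filter_upwards [h₁.nhdsNE_deriv, hF₂.eventually_analyticAt, hF₃.eventually_analyticAt]
      with z hz ha₂ ha₃
    rw [hz, deriv.fun_neg, deriv_fun_add ha₂.deriv.differentiableAt ha₃.deriv.differentiableAt]
  filter_upwards [h₀, h₁, h₂] with z e₀ e₁ e₂
  simp only [wronskian3, Matrix.det_fin_three, Matrix.of_apply, Matrix.cons_val, Pi.sub_apply,
    Pi.mul_apply, e₀, e₁, e₂]
  ring

theorem le_meromorphicOrderAt_wronskian3 (hsum : ∀ᶠ z in 𝓝[≠] x, F₁ z + F₂ z + F₃ z = 1)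
    (hF₂ : MeromorphicAt F₂ x) (hF₃ : MeromorphicAt F₃ x) {b c : ℤ}
    (hb : ↑b ≤ meromorphicOrderAt F₂ x) (hc : ↑c ≤ meromorphicOrderAt F₃ x) :
    ↑(b + c - 3) ≤ meromorphicOrderAt (wronskian3 F₁ F₂ F₃) x := by
  have hb₁ := le_meromorphicOrderAt_deriv hF₂ hb
  have hb₂ := le_meromorphicOrderAt_deriv hF₂.deriv hb₁
  have hc₁ := le_meromorphicOrderAt_deriv hF₃ hc
  have hc₂ := le_meromorphicOrderAt_deriv hF₃.deriv hc₁
  have hexp₁ : ((b + c - 3 : ℤ) : WithTop ℤ) = ↑(b - 1) + ↑(c - 1 - 1) := by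
    rw [← WithTop.coe_add]; congr 1; ring
  have hexp₂ : ((b + c - 3 : ℤ) : WithTop ℤ) = ↑(c - 1) + ↑(b - 1 - 1) := by
    rw [← WithTop.coe_add]; congr 1; ring
  rw [meromorphicOrderAt_congr (wronskian3_eventuallyEq_of_add_add_eq_one hsum hF₂ hF₃),
    sub_eq_add_neg (deriv F₂ * _)]
  refine le_trans (le_min ?_ ?_) (meromorphicOrderAt_add ?_ ?_)
  · rw [meromorphicOrderAt_mul hF₂.deriv hF₃.deriv.deriv, hexp₁]
    exact add_le_add hb₁ hc₂
  · rw [← meromorphicOrderAt_neg, meromorphicOrderAt_mul hF₃.deriv hF₂.deriv.deriv, hexp₂]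
    exact add_le_add hc₁ hb₂
  · exact hF₂.deriv.mul hF₃.deriv.deriv
  · exact (hF₃.deriv.mul hF₂.deriv.deriv).neg

end Wronskian

section MeroOrd

variable {f : ℂ → ℂ} {x : ℂ}

theorem meroOrd_eq_of_meromorphicOrderAt_eq {n : ℤ} (h : meromorphicOrderAt f x = n) :
    meroOrd f x = n := by
  by_cases hf : MeromorphicAt f x
  · simp [meroOrd, hf, h]
  · rw [meromorphicOrderAt_of_not_meromorphicAt hf] at h
    simp [meroOrd, hf, ← WithTop.coe_eq_coe.mp h]

theorem meromorphicOrderAt_eq_meroOrd (h : meroOrd f x ≠ 0) :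
    meromorphicOrderAt f x = meroOrd f x := by
  by_cases hf : MeromorphicAt f x
  · cases ho : meromorphicOrderAt f x with
    | top => simp [meroOrd, hf, ho] at h
    | coe n => simp [meroOrd, hf, ho]
  · simp [meroOrd, hf] at h

theorem le_meroOrd {n : ℤ} (hn : n ≤ 0) (h : ↑n ≤ meromorphicOrderAt f x) : n ≤ meroOrd f x := by
  by_cases hf : MeromorphicAt f x
  · cases ho : meromorphicOrderAt f x with
    | top => simp [meroOrd, hf, ho, hn]
    | coe m => simpa [meroOrd, hf, ho] using h
  · simp [meroOrd, hf, hn]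

theorem meromorphicOrderAt_fun_zpow_eq_mul_meroOrd (hf : MeromorphicAt f x)
    (h : meroOrd f x ≠ 0) (n : ℤ) :
    meromorphicOrderAt (fun z ↦ f z ^ n) x = ↑(n * meroOrd f x) := by
  rw [show (fun z ↦ f z ^ n) = f ^ n from rfl, meromorphicOrderAt_zpow hf,
    meromorphicOrderAt_eq_meroOrd h, WithTop.coe_mul]

theorem nevanA_le_of_common_pole {F₁ F₂ F₃ : ℂ → ℂ} {a b c d : ℤ}
    (ha : meromorphicOrderAt F₁ x = a) (hb : meromorphicOrderAt F₂ x = b)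
    (hc : meromorphicOrderAt F₃ x = c) (ha₀ : a < 0) (hb₀ : b < 0) (hc₀ : c < 0)
    (hd₀ : d ≤ 0) (hd : ↑d ≤ meromorphicOrderAt (wronskian3 F₁ F₂ F₃) x) :
    nevanA F₁ F₂ F₃ x ≤ 2 * (a + b + c) - 3 * d := by
  have hD := le_meroOrd hd₀ hd
  simp only [nevanA, zeroMult, poleMult, meroOrd_eq_of_meromorphicOrderAt_eq ha,
    meroOrd_eq_of_meromorphicOrderAt_eq hb, meroOrd_eq_of_meromorphicOrderAt_eq hc]
  omega

end MeroOrd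

theorem nevanA_bound_of_common_pole_unequal_general
    (f g h : ℂ → ℂ) (n m k : ℤ) (z₀ : ℂ)
    (hf : MeromorphicOn f Set.univ) (hg : MeromorphicOn g Set.univ)
    (hh : MeromorphicOn h Set.univ)
    (hmin : 2 ≤ min n (min m k))
    (heq : ∀ z : ℂ, AnalyticAt ℂ f z → AnalyticAt ℂ g z → AnalyticAt ℂ h z →
      f z ^ n + g z ^ m + h z ^ k = 1)
    (p q t : ℤ) (hp : p = meroOrd f z₀) (hq : q = meroOrd g z₀) (ht : t = meroOrd h z₀)
    (hmaxpqt : max p (max q t) < 0)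
    (hktmin : k * |t| = min (n * |p|) (min (m * |q|) (k * |t|))) :
    nevanA (fun z => f z ^ n) (fun z => g z ^ m) (fun z => h z ^ k) z₀ ≤
      9 - (m * |q| - k * |t|) := by
  have hfz := hf z₀ trivial
  have hgz := hg z₀ trivial
  have hhz := hh z₀ trivial
  have hsum : ∀ᶠ z in 𝓝[≠] z₀, f z ^ n + g z ^ m + h z ^ k = 1 := by
    filter_upwards [hfz.eventually_analyticAt, hgz.eventually_analyticAt,
      hhz.eventually_analyticAt] using heq
  have ho₁ : meromorphicOrderAt (fun z ↦ f z ^ n) z₀ = ↑(n * p) := by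
    rw [hp]; exact meromorphicOrderAt_fun_zpow_eq_mul_meroOrd hfz (by omega) n
  have ho₂ : meromorphicOrderAt (fun z ↦ g z ^ m) z₀ = ↑(m * q) := by
    rw [hq]; exact meromorphicOrderAt_fun_zpow_eq_mul_meroOrd hgz (by omega) m
  have ho₃ : meromorphicOrderAt (fun z ↦ h z ^ k) z₀ = ↑(k * t) := by
    rw [ht]; exact meromorphicOrderAt_fun_zpow_eq_mul_meroOrd hhz (by omega) k
  simp only [abs_of_neg (by omega : p < 0), abs_of_neg (by omega : q < 0),
    abs_of_neg (by omega : t < 0)] at hktmin ⊢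
  have hpt : n * p ≤ k * t := by linarith [min_le_left (n * -p) (min (m * -q) (k * -t))]
  have hqt : m * q ≤ k * t := by
    linarith [min_le_left (m * -q) (k * -t), min_le_right (n * -p) (min (m * -q) (k * -t))]
  have hnp : n * p < 0 := mul_neg_of_pos_of_neg (by omega) (by omega)
  have hkt : k * t < 0 := mul_neg_of_pos_of_neg (by omega) (by omega)
  have hpq : n * p = m * q := by
    have hord := meromorphicOrderAt_eq_of_add_add_eq_one hsum (hfz.fun_zpow n) (hgz.fun_zpow m)
      (hhz.fun_zpow k) (by rw [ho₁]; exact_mod_cast hnp) (by rw [ho₁, ho₃]; exact_mod_cast hpt)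
      (by rw [ho₂, ho₃]; exact_mod_cast hqt)
    rwa [ho₁, ho₂, WithTop.coe_eq_coe] at hord
  have hD := le_meromorphicOrderAt_wronskian3 hsum (hgz.fun_zpow m) (hhz.fun_zpow k) ho₂.ge ho₃.ge
  have hA := nevanA_le_of_common_pole ho₁ ho₂ ho₃ hnp (by linarith) hkt (by linarith) hD
  linarith

/-- **Lemma 2.10.** Under the standing hypotheses (meromorphic non-constant `f, g, h`
with `f^n + g^m + h^k = 1`, `min {n,m,k} ≥ 2`, `f^n, g^m, h^k` linearly independent),
let `p, q, t` be the orders of `f, g, h` at a point `z₀`. If `max {p,q,t} < 0`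
(so `z₀` is a common pole of `f, g, h`), `max {n|p|, m|q|, k|t|} > min {n|p|, m|q|, k|t|}`
and `k|t| = min {n|p|, m|q|, k|t|}`, then `A(z₀) ≤ 9 − (m|q| − k|t|)`. -/
theorem nevanA_bound_of_common_pole_unequal
    (f g h : ℂ → ℂ) (n m k : ℤ) (z₀ : ℂ)
    (hf : MeromorphicOn f Set.univ) (hg : MeromorphicOn g Set.univ)
    (hh : MeromorphicOn h Set.univ)
    (hfc : ¬ ∃ c : ℂ, ∀ z : ℂ, AnalyticAt ℂ f z → f z = c)
    (hgc : ¬ ∃ c : ℂ, ∀ z : ℂ, AnalyticAt ℂ g z → g z = c)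
    (hhc : ¬ ∃ c : ℂ, ∀ z : ℂ, AnalyticAt ℂ h z → h z = c)
    (hmin : 2 ≤ min n (min m k))
    (heq : ∀ z : ℂ, AnalyticAt ℂ f z → AnalyticAt ℂ g z → AnalyticAt ℂ h z →
      f z ^ n + g z ^ m + h z ^ k = 1)
    (hind : ∀ a b c : ℂ,
      (∀ z : ℂ, AnalyticAt ℂ f z → AnalyticAt ℂ g z → AnalyticAt ℂ h z →
        a * f z ^ n + b * g z ^ m + c * h z ^ k = 0) →
      a = 0 ∧ b = 0 ∧ c = 0)
    (p q t : ℤ) (hp : p = meroOrd f z₀) (hq : q = meroOrd g z₀) (ht : t = meroOrd h z₀)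
    (hmaxpqt : max p (max q t) < 0)
    (hne : min (n * |p|) (min (m * |q|) (k * |t|)) < max (n * |p|) (max (m * |q|) (k * |t|)))
    (hktmin : k * |t| = min (n * |p|) (min (m * |q|) (k * |t|))) :
    nevanA (fun z => f z ^ n) (fun z => g z ^ m) (fun z => h z ^ k) z₀ ≤
      9 - (m * |q| - k * |t|) :=
  nevanA_bound_of_common_pole_unequal_general f g h n m k z₀ hf hg hh hmin heq p q t hp hq ht
    hmaxpqt hktmin
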